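/- Let O be the order of conductor f = l^λ in an imaginary quadratic field K, where l is a prime and λ > 0. Let 𝔞 be a proper O-ideal, and let m be an arbitrary positive integer written as m = n·l^h, where n is a positive integer relatively prime to l and h ≥ 0. Then N(𝔞) = m if and only if there exist proper O-ideals 𝔟 and 𝔠 with N(𝔟) = n and N(𝔠) = l^h such that 𝔞 = 𝔟𝔠. -/

import Mathlib

open NumberField

/-- An order in the field `K`: a subring that is free of rank `2` as a `ℤ`-module. -/
def IsQuadraticOrder (K : Type*) [Field K] (O : Subring K) : Prop :=
  Module.Free ℤ O ∧ Module.finrank ℤ O = 2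

/-- The conductor of an order `O` in `K`: the index `[𝒪_K : O]` of `O` in the
ring of integers (the integral closure of `ℤ` in `K`). -/
noncomputable def orderConductor (K : Type*) [Field K] (O : Subring K) : ℕ :=
  AddSubgroup.relIndex O.toAddSubgroup (integralClosure ℤ K).toSubring.toAddSubgroup

/-- A proper ideal of an order `O` in `K`: a nonzero ideal whose multiplier ring
`{β ∈ K : β𝔞 ⊆ 𝔞}` is exactly `O`. -/
def IsProperIdeal {K : Type*} [Field K] (O : Subring K) (𝔞 : Ideal O) : Prop :=
  𝔞 ≠ ⊥ ∧ ∀ β : K, (∀ a ∈ 𝔞, ∃ c ∈ 𝔞, β * (a : K) = (c : K)) ↔ β ∈ O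

/-!
If `N(𝔞) = n k` with `n, k` coprime, then `n k ∈ 𝔞`, and `𝔟 = 𝔞 + (n)`, `𝔠 = 𝔞 + (k)` are comaximal
with `𝔟 𝔠 = 𝔞`. By the Chinese remainder theorem `N(𝔟) N(𝔠) = n k`; since `O/𝔟` is killed by `n`,
its order is prime to `k`, and likewise `N(𝔠)` is prime to `n`, which forces `N(𝔟) = n` and
`N(𝔠) = k`. Conversely, ideals of coprime norms are comaximal, so norms multiply. Properness passes
to factors: if `β 𝔟 ⊆ 𝔟` then `β 𝔟 𝔠 ⊆ 𝔟 𝔠`.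
-/

namespace Ideal

variable {R : Type*} [CommRing R]

theorem natCast_card_quotient_mem (I : Ideal R) : (Nat.card (R ⧸ I) : R) ∈ I := by
  rw [← Quotient.eq_zero_iff_mem, map_natCast, ← nsmul_one]
  exact card_nsmul_eq_zero'

theorem sup_eq_top_of_natCast_mem {I J : Ideal R} {a b : ℕ} (hab : a.Coprime b)
    (ha : (a : R) ∈ I) (hb : (b : R) ∈ J) : I ⊔ J = ⊤ := by
  have hcop : IsCoprime (a : R) (b : R) := by
    simpa using (Nat.isCoprime_iff_coprime.mpr hab).map (Int.castRingHom R)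
  rw [← isCoprime_span_singleton_iff, isCoprime_iff_sup_eq] at hcop
  exact eq_top_mono (sup_le_sup ((span_singleton_le_iff_mem _).2 ha)
    ((span_singleton_le_iff_mem _).2 hb)) hcop

theorem card_quotient_mul_of_sup_eq_top {I J : Ideal R} (h : I ⊔ J = ⊤) :
    Nat.card (R ⧸ I * J) = Nat.card (R ⧸ I) * Nat.card (R ⧸ J) := by
  rw [Nat.card_congr (quotientMulEquivQuotientProd I J (isCoprime_iff_sup_eq.mpr h)).toEquiv,
    Nat.card_prod]

theorem coprime_card_quotient_of_natCast_mem {I : Ideal R} [Finite (R ⧸ I)] {N k : ℕ}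
    (hN : (N : R) ∈ I) (hNk : N.Coprime k) : (Nat.card (R ⧸ I)).Coprime k := by
  have hann : ∀ x : R ⧸ I, N • x = 0 := by
    intro x
    rw [nsmul_eq_mul, ← map_natCast (Quotient.mk I), Quotient.eq_zero_iff_mem.mpr hN, zero_mul]
  exact Nat.Coprime.coprime_dvd_left (card_dvd_exponent_nsmul_rank' _ hann) (hNk.pow_left _)

theorem sup_span_natCast_mul_sup_span_natCast {a : Ideal R} {n k : ℕ} (hnk : n.Coprime k)
    (ha : ((n * k : ℕ) : R) ∈ a) : (a ⊔ span {(n : R)}) * (a ⊔ span {(k : R)}) = a := by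
  refine le_antisymm ?_ ?_
  · rw [sup_mul, mul_sup, mul_sup, span_singleton_mul_span_singleton, ← Nat.cast_mul]
    exact sup_le (sup_le mul_le_right mul_le_left)
      (sup_le mul_le_right ((span_singleton_le_iff_mem _).2 ha))
  · rw [mul_eq_inf_of_coprime (sup_eq_top_of_natCast_mem hnk
      (mem_sup_right (mem_span_singleton_self _)) (mem_sup_right (mem_span_singleton_self _)))]
    exact le_inf le_sup_left le_sup_left

theorem exists_mul_eq_of_card_quotient_eq_mul {a : Ideal R} {n k : ℕ} (hnk : n.Coprime k)
    (hn : n ≠ 0) (hk : k ≠ 0) (hcard : Nat.card (R ⧸ a) = n * k) :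
    ∃ b c : Ideal R, Nat.card (R ⧸ b) = n ∧ Nat.card (R ⧸ c) = k ∧ a = b * c := by
  set b := a ⊔ span {(n : R)}
  set c := a ⊔ span {(k : R)}
  have hnb : (n : R) ∈ b := mem_sup_right (mem_span_singleton_self _)
  have hkc : (k : R) ∈ c := mem_sup_right (mem_span_singleton_self _)
  have hbc : b * c = a :=
    sup_span_natCast_mul_sup_span_natCast hnk (hcard ▸ natCast_card_quotient_mem a)
  have hprod : Nat.card (R ⧸ b) * Nat.card (R ⧸ c) = n * k := by
    rw [← card_quotient_mul_of_sup_eq_top (sup_eq_top_of_natCast_mem hnk hnb hkc), hbc, hcard]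
  have hprod_ne : Nat.card (R ⧸ b) * Nat.card (R ⧸ c) ≠ 0 := hprod ▸ mul_ne_zero hn hk
  have : Finite (R ⧸ b) := Nat.finite_of_card_ne_zero (left_ne_zero_of_mul hprod_ne)
  have : Finite (R ⧸ c) := Nat.finite_of_card_ne_zero (right_ne_zero_of_mul hprod_ne)
  have hbk := coprime_card_quotient_of_natCast_mem hnb hnk
  have hcn := coprime_card_quotient_of_natCast_mem hkc hnk.symm
  have hb : Nat.card (R ⧸ b) = n :=
    Nat.dvd_antisymm (hbk.dvd_of_dvd_mul_right ⟨_, hprod.symm⟩)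
      (hcn.symm.dvd_of_dvd_mul_right ⟨k, hprod⟩)
  rw [hb] at hprod
  exact ⟨b, c, hb, Nat.eq_of_mul_eq_mul_left (Nat.pos_of_ne_zero hn) hprod, hbc.symm⟩

theorem card_quotient_eq_mul_iff {a : Ideal R} {n k : ℕ} (hnk : n.Coprime k)
    (hn : n ≠ 0) (hk : k ≠ 0) : Nat.card (R ⧸ a) = n * k ↔
      ∃ b c : Ideal R, Nat.card (R ⧸ b) = n ∧ Nat.card (R ⧸ c) = k ∧ a = b * c := by
  refine ⟨exists_mul_eq_of_card_quotient_eq_mul hnk hn hk, ?_⟩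
  rintro ⟨b, c, rfl, rfl, rfl⟩
  exact card_quotient_mul_of_sup_eq_top
    (sup_eq_top_of_natCast_mem hnk (natCast_card_quotient_mem b) (natCast_card_quotient_mem c))

end Ideal

namespace IsProperIdeal

variable {K : Type*} [Field K] {O : Subring K} {𝔟 𝔠 : Ideal O}

theorem of_mul_left (h : IsProperIdeal O (𝔟 * 𝔠)) : IsProperIdeal O 𝔟 := by
  refine ⟨fun hb => h.1 (by rw [hb, Submodule.bot_mul]),
    fun β => ⟨fun hβ => (h.2 β).mp ?_, ?_⟩⟩
  · intro a ha
    refine Submodule.mul_induction_on ha (fun b hb c hc => ?_) (fun x y hx hy => ?_)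
    · obtain ⟨b', hb', hbb'⟩ := hβ b hb
      exact ⟨b' * c, Ideal.mul_mem_mul hb' hc, by push_cast; rw [← mul_assoc, hbb']⟩
    · obtain ⟨x', hx', hxx'⟩ := hx
      obtain ⟨y', hy', hyy'⟩ := hy
      exact ⟨x' + y', add_mem hx' hy', by push_cast; rw [mul_add, hxx', hyy']⟩
  · exact fun hβ a ha => ⟨⟨β, hβ⟩ * a, 𝔟.mul_mem_left _ ha, rfl⟩

theorem of_mul_right (h : IsProperIdeal O (𝔟 * 𝔠)) : IsProperIdeal O 𝔠 :=
  of_mul_left (mul_comm 𝔟 𝔠 ▸ h)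

end IsProperIdeal

theorem norm_splitting_prime_power_conductor_general
    (K : Type*) [Field K]
    (O : Subring K)
    (l : ℕ) (hl : l.Prime)
    (𝔞 : Ideal O) (h𝔞 : IsProperIdeal O 𝔞)
    (m n h : ℕ) (hn : 0 < n) (hnl : Nat.Coprime n l)
    (hmfact : m = n * l ^ h) :
    Nat.card (↥O ⧸ 𝔞) = m ↔
      ∃ 𝔟 𝔠 : Ideal O,
        IsProperIdeal O 𝔟 ∧ IsProperIdeal O 𝔠 ∧
        Nat.card (↥O ⧸ 𝔟) = n ∧ Nat.card (↥O ⧸ 𝔠) = l ^ h ∧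
        𝔞 = 𝔟 * 𝔠 := by
  rw [hmfact, Ideal.card_quotient_eq_mul_iff (hnl.pow_right h) hn.ne' (pow_ne_zero h hl.ne_zero)]
  constructor
  · rintro ⟨𝔟, 𝔠, h𝔟, h𝔠, rfl⟩
    exact ⟨𝔟, 𝔠, h𝔞.of_mul_left, h𝔞.of_mul_right, h𝔟, h𝔠, rfl⟩
  · rintro ⟨𝔟, 𝔠, -, -, h𝔟, h𝔠, rfl⟩
    exact ⟨𝔟, 𝔠, h𝔟, h𝔠, rfl⟩

theorem norm_splitting_prime_power_conductor
    (K : Type*) [Field K] [NumberField K]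
    (hdeg : Module.finrank ℚ K = 2) (himag : IsEmpty (K →+* ℝ))
    (O : Subring K) (hO : IsQuadraticOrder K O)
    (l : ℕ) (hl : l.Prime) (lam : ℕ) (hlam : 0 < lam)
    (hf : orderConductor K O = l ^ lam)
    (𝔞 : Ideal O) (h𝔞 : IsProperIdeal O 𝔞)
    (m n h : ℕ) (hn : 0 < n) (hnl : Nat.Coprime n l)
    (hmfact : m = n * l ^ h) :
    Nat.card (↥O ⧸ 𝔞) = m ↔
      ∃ 𝔟 𝔠 : Ideal O,
        IsProperIdeal O 𝔟 ∧ IsProperIdeal O 𝔠 ∧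
        Nat.card (↥O ⧸ 𝔟) = n ∧ Nat.card (↥O ⧸ 𝔠) = l ^ h ∧
        𝔞 = 𝔟 * 𝔠 :=
  norm_splitting_prime_power_conductor_general K O l hl 𝔞 h𝔞 m n h hn hnl hmfact
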